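/- For every n ≥ 1 and 0 ≤ q ≤ 1/2, Σ_{i=0}^{⌊nq⌋} C(n, i) ≤ 2^{n·h(q)}, where h(q) = −q·log₂ q − (1−q)·log₂(1−q) is the binary entropy function (with h(0) = 0). -/

import Mathlib

/-- The binary entropy function (base-2 logarithm). -/
noncomputable def binEnt (q : ℝ) : ℝ := -q * Real.logb 2 q - (1 - q) * Real.logb 2 (1 - q)

/-!
Write `h = binEnt q`. Every term `q ^ i * (1 - q) ^ (n - i)` with `i ≤ n q` is at least
`q ^ (n q) * (1 - q) ^ (n (1 - q)) = 2 ^ (-n h)`, because `q / (1 - q) ≤ 1`. Hence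
`2 ^ (-n h) * ∑_{i ≤ n q} C(n, i) ≤ ∑_i C(n, i) q ^ i (1 - q) ^ (n - i) = (q + (1 - q)) ^ n = 1`.
-/

open Finset Real

theorem two_rpow_neg_mul_binEnt {q : ℝ} (hq0 : 0 < q) (hq1 : q < 1) (x : ℝ) :
    (2 : ℝ) ^ (-(x * binEnt q)) = q ^ (x * q) * (1 - q) ^ (x * (1 - q)) := by
  have h1q : 0 < 1 - q := by linarith
  have hexp : -(x * binEnt q) = logb 2 q * (x * q) + logb 2 (1 - q) * (x * (1 - q)) := by
    unfold binEnt; ring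
  rw [hexp, rpow_add two_pos, rpow_mul zero_le_two, rpow_mul zero_le_two,
    rpow_logb two_pos (by norm_num) hq0, rpow_logb two_pos (by norm_num) h1q]

theorem antitone_rpow_mul_one_sub_rpow_sub {q : ℝ} (hq0 : 0 < q) (hq : q ≤ 1 / 2) (x : ℝ) :
    Antitone fun a : ℝ => q ^ a * (1 - q) ^ (x - a) := by
  have h1q : 0 < 1 - q := by linarith
  have hform : ∀ a : ℝ, q ^ a * (1 - q) ^ (x - a) = (1 - q) ^ x * (q / (1 - q)) ^ a := by
    intro a
    rw [div_rpow hq0.le h1q.le, rpow_sub h1q]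
    field_simp
  intro a b hab
  simp only [hform]
  have hratio : q / (1 - q) ≤ 1 := by rw [div_le_one h1q]; linarith
  exact mul_le_mul_of_nonneg_left
    (rpow_le_rpow_of_exponent_ge (div_pos hq0 h1q) hratio hab) (by positivity)

theorem two_rpow_neg_mul_binEnt_le_pow_mul_pow {q : ℝ} (hq0 : 0 < q) (hq : q ≤ 1 / 2)
    {n i : ℕ} (hi : (i : ℝ) ≤ n * q) :
    (2 : ℝ) ^ (-(n * binEnt q)) ≤ q ^ i * (1 - q) ^ (n - i) := by
  have hin : i ≤ n := by
    have : (i : ℝ) ≤ n := hi.trans (by nlinarith [n.cast_nonneg (α := ℝ)])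
    exact_mod_cast this
  calc (2 : ℝ) ^ (-(n * binEnt q))
      = q ^ (n * q : ℝ) * (1 - q) ^ ((n : ℝ) - n * q) := by
        rw [two_rpow_neg_mul_binEnt hq0 (by linarith), mul_one_sub]
    _ ≤ q ^ (i : ℝ) * (1 - q) ^ ((n : ℝ) - i) :=
        antitone_rpow_mul_one_sub_rpow_sub hq0 hq n hi
    _ = q ^ i * (1 - q) ^ (n - i) := by
        rw [← Nat.cast_sub hin, rpow_natCast, rpow_natCast]

theorem sum_choose_mul_pow_mul_one_sub_pow_le_one {p : ℝ} (hp0 : 0 ≤ p) (hp1 : p ≤ 1)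
    {n : ℕ} {s : Finset ℕ} (hs : s ⊆ range (n + 1)) :
    ∑ i ∈ s, (n.choose i : ℝ) * (p ^ i * (1 - p) ^ (n - i)) ≤ 1 := by
  have hp1' : 0 ≤ 1 - p := by linarith
  calc ∑ i ∈ s, (n.choose i : ℝ) * (p ^ i * (1 - p) ^ (n - i))
      ≤ ∑ i ∈ range (n + 1), (n.choose i : ℝ) * (p ^ i * (1 - p) ^ (n - i)) :=
        sum_le_sum_of_subset_of_nonneg hs fun _ _ _ => by positivity
    _ = (p + (1 - p)) ^ n := by
        rw [add_pow]; exact sum_congr rfl fun _ _ => by ring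
    _ = 1 := by simp

theorem sum_binomial_le_two_pow_entropy_general (n : ℕ) (q : ℝ)
    (hq0 : 0 ≤ q) (hq1 : q ≤ 1 / 2) :
    (∑ i ∈ Finset.Icc 0 ⌊(n : ℝ) * q⌋₊, (n.choose i : ℝ)) ≤ (2 : ℝ) ^ ((n : ℝ) * binEnt q) := by
  rcases hq0.eq_or_lt with rfl | hq0
  · simp [binEnt]
  have hnq : 0 ≤ (n : ℝ) * q := by positivity
  have hle : ∀ i ∈ Icc 0 ⌊(n : ℝ) * q⌋₊, (i : ℝ) ≤ n * q := fun i hi =>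
    (Nat.cast_le.2 (mem_Icc.1 hi).2).trans (Nat.floor_le hnq)
  have hsub : Icc 0 ⌊(n : ℝ) * q⌋₊ ⊆ range (n + 1) := fun i hi => by
    have := hle i hi
    rw [mem_range, Nat.lt_succ_iff, ← Nat.cast_le (α := ℝ)]
    nlinarith
  have hE : 0 < (2 : ℝ) ^ (-((n : ℝ) * binEnt q)) := by positivity
  rw [← inv_inv ((2 : ℝ) ^ _), ← rpow_neg zero_le_two, ← one_div, le_div_iff₀ hE, sum_mul]
  calc ∑ i ∈ Icc 0 ⌊(n : ℝ) * q⌋₊, (n.choose i : ℝ) * (2 : ℝ) ^ (-((n : ℝ) * binEnt q))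
      ≤ ∑ i ∈ Icc 0 ⌊(n : ℝ) * q⌋₊, (n.choose i : ℝ) * (q ^ i * (1 - q) ^ (n - i)) :=
        sum_le_sum fun i hi => by
          gcongr; exact two_rpow_neg_mul_binEnt_le_pow_mul_pow hq0 hq1 (hle i hi)
    _ ≤ 1 := sum_choose_mul_pow_mul_one_sub_pow_le_one hq0.le (by linarith) hsub

theorem sum_binomial_le_two_pow_entropy (n : ℕ) (hn : 1 ≤ n) (q : ℝ)
    (hq0 : 0 ≤ q) (hq1 : q ≤ 1 / 2) :
    (∑ i ∈ Finset.Icc 0 ⌊(n : ℝ) * q⌋₊, (n.choose i : ℝ)) ≤ (2 : ℝ) ^ ((n : ℝ) * binEnt q) :=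
  sum_binomial_le_two_pow_entropy_general n q hq0 hq1
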